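/- arXiv:1203.3217 — 2 statements merged into one kernel-verified Lean document; each statement's English description precedes it below -/
import Mathlib

section
/- Let W^n = (W_1,...,W_n) and Z be discrete random variables on finite alphabets such that the total variation distance between their joint pmf p(w^n, z) and a conditionally-independent pmf p(z)·∏_{q=1}^n p̂_q(w_q | z) is less than ε < 1/2, for some family of conditional pmfs p̂_q. Then ∑_{q=1}^n I(W_q; W^{q-1} | Z) ≤ 2n(ε·log|W| + h_b(ε)). -/
/-!
Let `ν = p(z) · ∏_q p̂_q(w_q | z)`. By the chain rule,
`∑_q I(W_q; W^{q-1} | Z) = ∑_q H(W_q | Z) - H(W^n | Z)`, and this vanishes under `ν`, whose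
`Z`-marginal is that of `μ`. Hence the sum equals
`∑_q [H_μ(W_q, Z) - H_ν(W_q, Z)] - [H_μ(W^n, Z) - H_ν(W^n, Z)]`. Each of these entropy
differences is between two pmfs with a common `Z`-marginal and total variation distance at most
`ε ≤ 1/2`, so a conditional Fannes inequality bounds it by `ε · log |A| + h_b(ε)`, where `A` is
`W` for the coordinates and `W^n` for the joint term. Summing gives
`n (ε log |W| + h_b(ε)) + (n ε log |W| + h_b(ε)) ≤ 2n (ε log |W| + h_b(ε))`.
-/

open Finset

/-- Total variation distance between two pmfs on a finite set: half the ℓ¹ distance. -/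
noncomputable def TV {α : Type*} [Fintype α] (p q : α → ℝ) : ℝ :=
  (∑ a, |p a - q a|) / 2

/-- Shannon entropy of a pmf. -/
noncomputable def ent {α : Type*} [Fintype α] (p : α → ℝ) : ℝ :=
  -∑ a, p a * Real.log (p a)

/-- Binary entropy function. -/
noncomputable def hb (t : ℝ) : ℝ := -t * Real.log t - (1 - t) * Real.log (1 - t)

/-- `p` is a probability mass function. -/
def IsPMF {α : Type*} [Fintype α] (p : α → ℝ) : Prop :=
  (∀ a, 0 ≤ p a) ∧ ∑ a, p a = 1

/-- Pushforward pmf (distribution of the random variable `X` under `μ`). -/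
noncomputable def pushf {Ω α : Type*} [Fintype Ω] [DecidableEq α]
    (μ : Ω → ℝ) (X : Ω → α) : α → ℝ :=
  fun a => ∑ ω ∈ Finset.univ.filter (fun ω => X ω = a), μ ω

/-- Entropy of a random variable `X` on a finite probability space with pmf `μ`. -/
noncomputable def Hent {Ω α : Type*} [Fintype Ω] [Fintype α] [DecidableEq α]
    (μ : Ω → ℝ) (X : Ω → α) : ℝ := ent (pushf μ X)

/-- Conditional mutual information `I(A ; C | B)` of random variables on a finite
probability space with pmf `μ`, defined via entropies:
`I(A;C|B) = H(A,B) + H(B,C) - H(A,B,C) - H(B)`. -/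
noncomputable def condMI {Ω α β γ : Type*} [Fintype Ω] [Fintype α] [Fintype β] [Fintype γ]
    [DecidableEq α] [DecidableEq β] [DecidableEq γ]
    (μ : Ω → ℝ) (A : Ω → α) (B : Ω → β) (C : Ω → γ) : ℝ :=
  Hent μ (fun ω => (A ω, B ω)) + Hent μ (fun ω => (B ω, C ω))
    - Hent μ (fun ω => (A ω, B ω, C ω)) - Hent μ B

open Real

section NegMulLog

variable {ι : Type*}

theorem negMulLog_sum_le_sum_negMulLog {s : Finset ι} {x : ι → ℝ} (hx : ∀ i ∈ s, 0 ≤ x i) :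
    negMulLog (∑ i ∈ s, x i) ≤ ∑ i ∈ s, negMulLog (x i) := by
  simp only [negMulLog, neg_mul, Finset.sum_neg_distrib, Finset.sum_mul, neg_le_neg_iff]
  refine Finset.sum_le_sum fun i hi => ?_
  rcases (hx i hi).eq_or_lt with h | h
  · simp [← h]
  · exact mul_le_mul_of_nonneg_left
      (log_le_log h (Finset.single_le_sum hx hi)) h.le

theorem sum_negMulLog_le [Fintype ι] {x : ι → ℝ} (hx : ∀ i, 0 ≤ x i) :
    ∑ i, negMulLog (x i) ≤ negMulLog (∑ i, x i) + (∑ i, x i) * log (Fintype.card ι) := by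
  cases isEmpty_or_nonempty ι
  · simp
  have hd : (0 : ℝ) < Fintype.card ι := by exact_mod_cast Fintype.card_pos
  have jensen := concaveOn_negMulLog.le_map_sum (t := Finset.univ)
    (w := fun _ => (Fintype.card ι : ℝ)⁻¹) (p := x) (fun _ _ => by positivity)
    (by simp [hd.ne']) (fun i _ => Set.mem_Ici.2 (hx i))
  simp only [smul_eq_mul] at jensen
  rw [← Finset.mul_sum, ← Finset.mul_sum, negMulLog_mul, negMulLog, log_inv] at jensen
  set d : ℝ := (Fintype.card ι : ℝ)
  calc ∑ i, negMulLog (x i) = d * (d⁻¹ * ∑ i, negMulLog (x i)) := by field_simp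
    _ ≤ d * ((∑ i, x i) * (-d⁻¹ * -log d) + d⁻¹ * negMulLog (∑ i, x i)) := by gcongr
    _ = negMulLog (∑ i, x i) + (∑ i, x i) * log d := by field_simp; ring

theorem negMulLog_prod (s : Finset ι) (x : ι → ℝ) :
    negMulLog (∏ i ∈ s, x i) = ∑ i ∈ s, (∏ j ∈ s, x j) * -log (x i) := by
  by_cases h : ∏ i ∈ s, x i = 0
  · simp [h]
  rw [negMulLog, log_prod (fun i hi => Finset.prod_ne_zero_iff.1 h i hi), Finset.mul_sum]
  simp only [neg_mul, mul_neg, Finset.sum_neg_distrib]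

end NegMulLog

section Entropy

variable {α ζ : Type*} [Fintype α]

theorem ent_eq_sum_negMulLog (p : α → ℝ) : ent p = ∑ a, negMulLog (p a) := by
  simp [ent, negMulLog_eq_neg]

theorem ent_eq_sum_sum [Fintype ζ] (u : α × ζ → ℝ) :
    ent u = ∑ z, ∑ a, negMulLog (u (a, z)) := by
  rw [ent_eq_sum_negMulLog, Fintype.sum_prod_type, Finset.sum_comm]

theorem hb_eq_negMulLog_add (t : ℝ) : hb t = negMulLog t + negMulLog (1 - t) := by
  simp only [hb, negMulLog]; ring

theorem hb_eq_binEntropy (t : ℝ) : hb t = binEntropy t := by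
  rw [hb_eq_negMulLog_add, binEntropy_eq_negMulLog_add_negMulLog_one_sub]

theorem ent_add_le {x y : α → ℝ} (hx : ∀ a, 0 ≤ x a) (hy : ∀ a, 0 ≤ y a) :
    ent (fun a => x a + y a) ≤ ent x + ent y := by
  simp only [ent_eq_sum_negMulLog, ← Finset.sum_add_distrib]
  refine Finset.sum_le_sum fun a _ => ?_
  simpa using negMulLog_sum_le_sum_negMulLog (s := Finset.univ) (x := ![x a, y a])
    (by simp [Fin.forall_fin_two, hx a, hy a])

/-- Concavity of entropy. -/
theorem le_ent_add {x y : α → ℝ} (hx : ∀ a, 0 ≤ x a) (hy : ∀ a, 0 ≤ y a)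
    (hsum : ∑ a, (x a + y a) = 1) :
    ent x + ent y - hb (∑ a, y a) ≤ ent (fun a => x a + y a) := by
  have rescale : ∀ u : α → ℝ, (∀ a, 0 ≤ u a) → ∀ a, (∑ b, u b) * (u a / ∑ b, u b) = u a := by
    intro u hu a
    rcases eq_or_ne (∑ b, u b) 0 with h | h
    · simp [(Finset.sum_eq_zero_iff_of_nonneg fun b _ => hu b).1 h a (Finset.mem_univ a)]
    · field_simp
  have total : ∀ u : α → ℝ,
      (∑ a, u a / ∑ b, u b) * negMulLog (∑ b, u b) = negMulLog (∑ b, u b) := by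
    intro u
    rcases eq_or_ne (∑ b, u b) 0 with h | h
    · simp [h]
    · rw [← Finset.sum_div, div_self h, one_mul]
  have hX : 0 ≤ ∑ a, x a := Finset.sum_nonneg fun a _ => hx a
  have hY : 0 ≤ ∑ a, y a := Finset.sum_nonneg fun a _ => hy a
  have hXY : ∑ a, x a + ∑ a, y a = 1 := by rwa [← Finset.sum_add_distrib]
  have pointwise : ∀ a,
      negMulLog (x a) - x a / (∑ b, x b) * negMulLog (∑ b, x b)
        + (negMulLog (y a) - y a / (∑ b, y b) * negMulLog (∑ b, y b))
        ≤ negMulLog (x a + y a) := by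
    intro a
    have h := concaveOn_negMulLog.2 (Set.mem_Ici.2 (div_nonneg (hx a) hX))
      (Set.mem_Ici.2 (div_nonneg (hy a) hY)) hX hY hXY
    have hxa := negMulLog_mul (∑ b, x b) (x a / ∑ b, x b)
    have hya := negMulLog_mul (∑ b, y b) (y a / ∑ b, y b)
    simp only [smul_eq_mul, rescale x hx, rescale y hy] at h hxa hya
    linarith
  have := Finset.sum_le_sum fun a (_ : a ∈ Finset.univ) => pointwise a
  simp only [Finset.sum_add_distrib, Finset.sum_sub_distrib, ← Finset.sum_mul] at this
  rw [total x, total y] at this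
  rw [ent_eq_sum_negMulLog, ent_eq_sum_negMulLog, ent_eq_sum_negMulLog, hb_eq_negMulLog_add,
    ← eq_sub_of_add_eq hXY]
  linarith

theorem ent_sub_ent_le_of_marginal_eq [Fintype ζ] {u v : α × ζ → ℝ} (hu : ∀ x, 0 ≤ u x)
    (hv : ∀ x, 0 ≤ v x) (hmarg : ∀ z, ∑ a, u (a, z) = ∑ a, v (a, z)) :
    ent u - ent v ≤ (∑ x, u x) * log (Fintype.card α) := by
  have hu_le :
      ent u ≤ ∑ z, (negMulLog (∑ a, u (a, z)) + (∑ a, u (a, z)) * log (Fintype.card α)) := by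
    rw [ent_eq_sum_sum]
    exact Finset.sum_le_sum fun z _ => sum_negMulLog_le fun a => hu (a, z)
  have hv_ge : ∑ z, negMulLog (∑ a, v (a, z)) ≤ ent v := by
    rw [ent_eq_sum_sum]
    exact Finset.sum_le_sum fun z _ => negMulLog_sum_le_sum_negMulLog fun a _ => hv (a, z)
  simp only [Finset.sum_add_distrib, ← Finset.sum_mul, hmarg] at hu_le
  rw [Fintype.sum_prod_type_right]
  simp only [hmarg]
  linarith

theorem TV_comm (p q : α → ℝ) : TV p q = TV q p := by
  simp only [TV, abs_sub_comm]

theorem TV_nonneg (p q : α → ℝ) : 0 ≤ TV p q := by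
  unfold TV
  positivity

theorem sum_sub_min_eq_TV {p q : α → ℝ} (h : ∑ a, p a = ∑ a, q a) :
    ∑ a, (p a - min (p a) (q a)) = TV p q := by
  have pointwise : ∀ a, p a - min (p a) (q a) = (|p a - q a| + (p a - q a)) / 2 := by
    intro a
    rcases le_total (p a) (q a) with h | h
    · rw [min_eq_left h, abs_of_nonpos (sub_nonpos.2 h)]; ring
    · rw [min_eq_right h, abs_of_nonneg (sub_nonneg.2 h)]; ring
  simp only [pointwise, TV, ← Finset.sum_div, Finset.sum_add_distrib, Finset.sum_sub_distrib, h,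
    sub_self, add_zero]

/-- A conditional Fannes inequality: split `μ` and `ν` into their common part `min μ ν` and the
remainders, which have mass `TV μ ν` each and, since `μ` and `ν` have the same `ζ`-marginal,
also equal `ζ`-marginals. -/
theorem ent_sub_ent_le [Fintype ζ] {μ ν : α × ζ → ℝ} (hμ : IsPMF μ) (hν : IsPMF ν)
    (hmarg : ∀ z, ∑ a, μ (a, z) = ∑ a, ν (a, z)) :
    ent μ - ent ν ≤ TV μ ν * log (Fintype.card α) + hb (TV μ ν) := by
  set m : α × ζ → ℝ := fun x => min (μ x) (ν x)
  have hm : ∀ x, 0 ≤ m x := fun x => le_min (hμ.1 x) (hν.1 x)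
  have hμm : ∀ x, 0 ≤ μ x - m x := fun x => sub_nonneg.2 (min_le_left _ _)
  have hνm : ∀ x, 0 ≤ ν x - m x := fun x => sub_nonneg.2 (min_le_right _ _)
  have hμ_sum : ∑ x, (μ x - m x) = TV μ ν := sum_sub_min_eq_TV (hμ.2.trans hν.2.symm)
  have hν_sum : ∑ x, (ν x - m x) = TV μ ν := by
    simp only [m, min_comm (μ _), TV_comm μ ν]
    exact sum_sub_min_eq_TV (hν.2.trans hμ.2.symm)
  have upper : ent μ ≤ ent m + ent (fun x => μ x - m x) := by
    simpa using ent_add_le hm hμm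
  have lower : ent m + ent (fun x => ν x - m x) - hb (TV μ ν) ≤ ent ν := by
    simpa [hν_sum, hν.2] using le_ent_add hm hνm
  have remainders := ent_sub_ent_le_of_marginal_eq hμm hνm fun z => by
    simp only [Finset.sum_sub_distrib, hmarg z]
  rw [hμ_sum] at remainders
  linarith

theorem abs_ent_sub_le [Fintype ζ] {μ ν : α × ζ → ℝ} (hμ : IsPMF μ) (hν : IsPMF ν)
    (hmarg : ∀ z, ∑ a, μ (a, z) = ∑ a, ν (a, z)) {ε : ℝ} (hTV : TV μ ν ≤ ε) (hε : ε ≤ 1 / 2) :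
    |ent μ - ent ν| ≤ ε * log (Fintype.card α) + hb ε := by
  have hL : 0 ≤ log (Fintype.card α) := log_natCast_nonneg _
  have hhb : hb (TV μ ν) ≤ hb ε := by
    rw [hb_eq_binEntropy, hb_eq_binEntropy]
    exact binEntropy_strictMonoOn.monotoneOn ⟨TV_nonneg μ ν, by linarith⟩
      ⟨(TV_nonneg μ ν).trans hTV, by linarith⟩ hTV
  have := mul_le_mul_of_nonneg_right hTV hL
  rw [abs_sub_le_iff]
  constructor
  · linarith [ent_sub_ent_le hμ hν hmarg]
  · linarith [TV_comm μ ν ▸ ent_sub_ent_le hν hμ fun z => (hmarg z).symm]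

end Entropy

section Pushforward

variable {Ω α β ζ : Type*} [Fintype Ω]

theorem pushf_isPMF [Fintype α] [DecidableEq α] {μ : Ω → ℝ} (hμ : IsPMF μ) (X : Ω → α) :
    IsPMF (pushf μ X) :=
  ⟨fun _ => Finset.sum_nonneg fun ω _ => hμ.1 ω, (Finset.sum_fiberwise _ X μ).trans hμ.2⟩

theorem pushf_id [DecidableEq Ω] (μ : Ω → ℝ) : pushf μ id = μ := by
  funext a
  simp [pushf, Finset.filter_eq']

theorem pushf_snd_apply [Fintype α] [Fintype ζ] [DecidableEq ζ] (μ : α × ζ → ℝ) (z : ζ) :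
    pushf μ Prod.snd z = ∑ a, μ (a, z) := by
  rw [pushf, Finset.sum_filter, Fintype.sum_prod_type]
  simp

theorem sum_pushf_pair [Fintype α] [DecidableEq α] [DecidableEq ζ] (μ : Ω → ℝ) (X : Ω → α)
    (Z : Ω → ζ) (z : ζ) : ∑ a, pushf μ (fun ω => (X ω, Z ω)) (a, z) = pushf μ Z z := by
  simp only [pushf]
  rw [← Finset.sum_fiberwise (Finset.univ.filter fun ω => Z ω = z) X μ]
  simp only [Finset.filter_filter, Prod.mk.injEq, and_comm]

theorem TV_pushf_le [Fintype α] [DecidableEq α] (μ ν : Ω → ℝ) (X : Ω → α) :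
    TV (pushf μ X) (pushf ν X) ≤ TV μ ν := by
  unfold TV pushf
  gcongr
  rw [← Finset.sum_fiberwise Finset.univ X fun ω => |μ ω - ν ω|]
  refine Finset.sum_le_sum fun a _ => ?_
  rw [← Finset.sum_sub_distrib]
  exact Finset.abs_sum_le_sum_abs _ _

theorem Hent_comp_of_injective [Fintype α] [DecidableEq α] [Fintype β] [DecidableEq β]
    (μ : Ω → ℝ) (X : Ω → α) {g : α → β} (hg : Function.Injective g) :
    Hent μ (fun ω => g (X ω)) = Hent μ X := by
  simp only [Hent, ent]
  congr 1
  refine (Fintype.sum_of_injective g hg _ _ (fun b hb => ?_) fun a => ?_).symm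
  · have : Finset.univ.filter (fun ω => g (X ω) = b) = ∅ :=
      Finset.filter_false_of_mem fun ω _ h => hb ⟨X ω, h⟩
    simp [pushf, this]
  · simp [pushf, hg.eq_iff]

theorem abs_Hent_pair_sub_le [Fintype α] [DecidableEq α] [Fintype ζ] [DecidableEq ζ]
    {μ ν : Ω → ℝ} (hμ : IsPMF μ) (hν : IsPMF ν) (X : Ω → α) (Z : Ω → ζ) (hZ : pushf μ Z = pushf ν Z)
    {ε : ℝ} (hTV : TV μ ν ≤ ε) (hε : ε ≤ 1 / 2) :
    |Hent μ (fun ω => (X ω, Z ω)) - Hent ν (fun ω => (X ω, Z ω))|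
      ≤ ε * log (Fintype.card α) + hb ε :=
  abs_ent_sub_le (pushf_isPMF hμ _) (pushf_isPMF hν _)
    (fun z => by rw [sum_pushf_pair, sum_pushf_pair, hZ]) ((TV_pushf_le μ ν _).trans hTV) hε

end Pushforward

section Product

variable {ι κ : Type*} [Fintype ι] [DecidableEq ι] [Fintype κ]

theorem sum_prod_mul_apply {R : Type*} [CommSemiring R] {t : ι → κ → R}
    (ht : ∀ j, ∑ w, t j w = 1) (q : ι) (φ : κ → R) :
    ∑ f : ι → κ, (∏ j, t j (f j)) * φ (f q) = ∑ w, t q w * φ w := by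
  set g : ι → κ → R := fun j w => t j w * if j = q then φ w else 1
  have hg (f : ι → κ) : (∏ j, t j (f j)) * φ (f q) = ∏ j, g j (f j) := by
    simp only [g, Finset.prod_mul_distrib, Finset.prod_ite_eq', Finset.mem_univ, if_true]
  rw [Finset.sum_congr rfl fun f _ => hg f, ← Fintype.prod_sum, Fintype.prod_eq_single q]
  · simp [g]
  · intro j hj
    simp [g, hj, ht]

theorem sum_pi_prod {R : Type*} [CommSemiring R] {t : ι → κ → R} (ht : ∀ j, ∑ w, t j w = 1) :
    ∑ f : ι → κ, ∏ j, t j (f j) = 1 := by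
  rw [← Fintype.prod_sum]
  exact Finset.prod_eq_one fun j _ => ht j

theorem isPMF_pi_prod {t : ι → κ → ℝ} (ht : ∀ j, IsPMF (t j)) :
    IsPMF fun f : ι → κ => ∏ j, t j (f j) :=
  ⟨fun _ => Finset.prod_nonneg fun j _ => (ht j).1 _, sum_pi_prod fun j => (ht j).2⟩

theorem ent_pi_prod {t : ι → κ → ℝ} (ht : ∀ j, ∑ w, t j w = 1) :
    ent (fun f : ι → κ => ∏ j, t j (f j)) = ∑ j, ent (t j) := by
  simp only [ent_eq_sum_negMulLog, negMulLog_prod]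
  rw [Finset.sum_comm]
  refine Finset.sum_congr rfl fun j _ => ?_
  rw [sum_prod_mul_apply ht j fun w => -log (t j w)]
  simp only [negMulLog, neg_mul, mul_neg]

theorem pushf_eval_pi_prod [DecidableEq κ] {t : ι → κ → ℝ} (ht : ∀ j, ∑ w, t j w = 1) (q : ι) :
    pushf (fun f : ι → κ => ∏ j, t j (f j)) (fun f => f q) = t q := by
  funext a
  simpa [pushf, Finset.sum_filter] using sum_prod_mul_apply ht q fun w => if w = a then 1 else 0

end Product

section CondJoint

variable {α β ζ : Type*} [Fintype α]

def condJoint (P : ζ → ℝ) (c : ζ → α → ℝ) : α × ζ → ℝ := fun x => P x.2 * c x.2 x.1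

theorem sum_condJoint {P : ζ → ℝ} {c : ζ → α → ℝ} (hc : ∀ z, ∑ a, c z a = 1) (z : ζ) :
    ∑ a, condJoint P c (a, z) = P z := by
  simp [condJoint, ← Finset.mul_sum, hc]

theorem isPMF_condJoint [Fintype ζ] {P : ζ → ℝ} {c : ζ → α → ℝ} (hP : IsPMF P)
    (hc : ∀ z, IsPMF (c z)) :
    IsPMF (condJoint P c) :=
  ⟨fun x => mul_nonneg (hP.1 _) ((hc _).1 _), by
    rw [Fintype.sum_prod_type_right]
    simpa [sum_condJoint fun z => (hc z).2] using hP.2⟩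

theorem pushf_snd_condJoint [Fintype ζ] [DecidableEq ζ] {P : ζ → ℝ} {c : ζ → α → ℝ}
    (hc : ∀ z, ∑ a, c z a = 1) : pushf (condJoint P c) Prod.snd = P :=
  funext fun z => (pushf_snd_apply _ z).trans (sum_condJoint hc z)

theorem pushf_condJoint [Fintype ζ] [Fintype β] [DecidableEq β] [DecidableEq ζ] (P : ζ → ℝ)
    (c : ζ → α → ℝ) (X : α → β) :
    pushf (condJoint P c) (fun ω => (X ω.1, ω.2)) = condJoint P fun z => pushf (c z) X := by
  funext ⟨b, z⟩
  simp [pushf, condJoint, Finset.sum_filter, Fintype.sum_prod_type, ite_and, Finset.mul_sum]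

theorem ent_condJoint [Fintype ζ] {P : ζ → ℝ} {c : ζ → α → ℝ} (hc : ∀ z, ∑ a, c z a = 1) :
    ent (condJoint P c) = ent P + ∑ z, P z * ent (c z) := by
  rw [ent_eq_sum_sum, ent_eq_sum_negMulLog, ← Finset.sum_add_distrib]
  simp only [condJoint, negMulLog_mul, Finset.sum_add_distrib, ← Finset.sum_mul,
    ← Finset.mul_sum, hc, one_mul, ent_eq_sum_negMulLog]

end CondJoint

theorem injective_last_snd_init {α β : Type*} {m : ℕ} :
    Function.Injective
      fun vz : (Fin (m + 1) → α) × β => (vz.1 (Fin.last m), vz.2, Fin.init vz.1) := by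
  rintro ⟨v, z⟩ ⟨v', z'⟩ h
  simp only [Prod.mk.injEq] at h
  obtain ⟨hlast, rfl, hinit⟩ := h
  rw [← Fin.snoc_init_self v, ← Fin.snoc_init_self v', hlast, hinit]

section ChainRule

variable {n : ℕ} {𝒲 𝒵 : Type*} [Fintype 𝒲] [Fintype 𝒵] [DecidableEq 𝒲] [DecidableEq 𝒵]

/-- The chain rule: `∑_q I(W_q; W^{q-1} | Z) = ∑_q H(W_q | Z) - H(W^n | Z)`. -/
theorem sum_condMI_prefix_eq (μ : (Fin n → 𝒲) × 𝒵 → ℝ) :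
    ∑ q : Fin n, condMI μ (fun ω => ω.1 q) Prod.snd (fun ω => Fin.take q q.isLt.le ω.1)
      = ∑ q : Fin n, (Hent μ (fun ω => (ω.1 q, ω.2)) - Hent μ Prod.snd)
        - (Hent μ (fun ω => (ω.1, ω.2)) - Hent μ Prod.snd) := by
  set E : Fin (n + 1) → ℝ := fun k => Hent μ (fun ω => (Fin.take k k.is_le ω.1, ω.2))
  have swap (q : Fin n) :
      Hent μ (fun ω => (ω.2, Fin.take q q.isLt.le ω.1)) = E q.castSucc :=
    Hent_comp_of_injective μ (fun ω => (Fin.take q q.isLt.le ω.1, ω.2)) (g := Prod.swap)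
      Prod.swap_injective
  have snoc (q : Fin n) :
      Hent μ (fun ω => (ω.1 q, ω.2, Fin.take q q.isLt.le ω.1)) = E q.succ :=
    Hent_comp_of_injective μ (fun ω => (Fin.take (q + 1) q.isLt ω.1, ω.2))
      (g := fun vz => (vz.1 (Fin.last q), vz.2, Fin.init vz.1)) injective_last_snd_init
  have first : E 0 = Hent μ Prod.snd := by
    show Hent μ (fun ω => (Fin.take 0 (Nat.zero_le n) ω.1, ω.2)) = _
    have : (fun ω : (Fin n → 𝒲) × 𝒵 => (Fin.take 0 (Nat.zero_le n) ω.1, ω.2))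
        = fun ω => (default, ω.2) := funext fun ω => Prod.ext (Subsingleton.elim _ _) rfl
    exact (congrArg (Hent μ) this).trans
      (Hent_comp_of_injective μ Prod.snd (g := Prod.mk default) (Prod.mk_right_injective _))
  have telescope : ∑ q : Fin n, (E q.castSucc - E q.succ) = E 0 - E (Fin.last n) := by
    have h1 := Fin.sum_univ_castSucc E
    have h2 := Fin.sum_univ_succ E
    rw [Finset.sum_sub_distrib]
    linarith
  have last : E (Fin.last n) = Hent μ (fun ω => (ω.1, ω.2)) := rfl
  rw [first, last, Finset.sum_sub_distrib] at telescope
  simp only [condMI, swap, snoc, Finset.sum_sub_distrib, Finset.sum_add_distrib]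
  linarith

theorem sum_condMI_prefix_condJoint_eq_zero (P : 𝒵 → ℝ) {t : Fin n → 𝒲 → 𝒵 → ℝ}
    (ht : ∀ q z, ∑ w, t q w z = 1) :
    ∑ q : Fin n, condMI (condJoint P fun z f => ∏ j, t j (f j) z)
      (fun ω : (Fin n → 𝒲) × 𝒵 => ω.1 q) Prod.snd
      (fun ω => Fin.take q q.isLt.le ω.1) = 0 := by
  have hc (z : 𝒵) : ∑ f : Fin n → 𝒲, ∏ j, t j (f j) z = 1 := sum_pi_prod fun j => ht j z
  have hZ : Hent (condJoint P fun z (f : Fin n → 𝒲) => ∏ j, t j (f j) z) Prod.snd = ent P := by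
    rw [Hent, pushf_snd_condJoint hc]
  have hcoord (q : Fin n) : Hent (condJoint P fun z (f : Fin n → 𝒲) => ∏ j, t j (f j) z)
      (fun ω => (ω.1 q, ω.2))
      = ent P + ∑ z, P z * ent fun w => t q w z := by
    have h := pushf_condJoint P (fun z (f : Fin n → 𝒲) => ∏ j, t j (f j) z) fun f => f q
    beta_reduce at h
    rw [Hent, h]
    simp only [pushf_eval_pi_prod (fun j => ht j _) q]
    exact ent_condJoint (ht q)
  have hjoint : Hent (condJoint P fun z (f : Fin n → 𝒲) => ∏ j, t j (f j) z)
      (fun ω => (ω.1, ω.2)) = ent P + ∑ z, P z * ∑ q, ent fun w => t q w z := by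
    rw [Hent, show (fun ω : (Fin n → 𝒲) × 𝒵 => (ω.1, ω.2)) = id from rfl, pushf_id,
      ent_condJoint hc]
    simp only [ent_pi_prod fun j => ht j _]
  rw [sum_condMI_prefix_eq, hZ, hjoint]
  simp only [hcoord, add_sub_cancel_left, Finset.mul_sum]
  rw [Finset.sum_comm, sub_self]

theorem sum_condMI_prefix_eq_sub_condJoint (μ : (Fin n → 𝒲) × 𝒵 → ℝ)
    {t : Fin n → 𝒲 → 𝒵 → ℝ} (ht : ∀ q z, ∑ w, t q w z = 1) {ν : (Fin n → 𝒲) × 𝒵 → ℝ}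
    (hν : ν = condJoint (pushf μ Prod.snd) fun z (f : Fin n → 𝒲) => ∏ j, t j (f j) z) :
    ∑ q : Fin n, condMI μ (fun ω => ω.1 q) Prod.snd (fun ω => Fin.take q q.isLt.le ω.1)
      = ∑ q : Fin n, (Hent μ (fun ω => (ω.1 q, ω.2)) - Hent ν (fun ω => (ω.1 q, ω.2)))
        - (Hent μ (fun ω => (ω.1, ω.2)) - Hent ν (fun ω => (ω.1, ω.2))) := by
  have hZ : Hent μ Prod.snd = Hent ν Prod.snd := by
    rw [Hent, Hent, hν, pushf_snd_condJoint fun z => sum_pi_prod fun j => ht j z]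
  have hν_zero := sum_condMI_prefix_eq ν
  rw [hν, sum_condMI_prefix_condJoint_eq_zero _ ht, ← hν] at hν_zero
  rw [sum_condMI_prefix_eq, hZ]
  simp only [Finset.sum_sub_distrib] at hν_zero ⊢
  linarith

end ChainRule

/-- Lemma on near-conditional-independence: if the joint pmf `μ` of
`(W^n, Z)` is within total variation `ε < 1/2` of `p(z)·∏_q p̂_q(w_q|z)` (where `p(z)`
is the `Z`-marginal of `μ`), then `∑_q I(W_q; W^{q-1} | Z) ≤ 2n(ε·log|W| + h_b(ε))`. -/
theorem sum_condMI_prefix_bound {n : ℕ} {𝒲 𝒵 : Type*} [Fintype 𝒲] [Fintype 𝒵]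
    [DecidableEq 𝒲] [DecidableEq 𝒵]
    (μ : (Fin n → 𝒲) × 𝒵 → ℝ) (phat : Fin n → 𝒲 → 𝒵 → ℝ) (ε : ℝ)
    (hμ : IsPMF μ)
    (hphat : ∀ q z, (∀ w, 0 ≤ phat q w z) ∧ ∑ w, phat q w z = 1)
    (hε : ε < 1/2)
    (hTV : TV μ (fun wz => pushf μ Prod.snd wz.2 * ∏ q, phat q (wz.1 q) wz.2) < ε) :
    ∑ q : Fin n,
        condMI μ (fun ω => ω.1 q) Prod.snd
          (fun ω => fun j : Fin q.val => ω.1 (Fin.castLE q.isLt.le j))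
      ≤ 2 * n * (ε * Real.log (Fintype.card 𝒲) + hb ε) := by
  obtain rfl | hn := n.eq_zero_or_pos
  · simp
  set ν := condJoint (pushf μ Prod.snd) fun z (f : Fin n → 𝒲) => ∏ q, phat q (f q) z
  have hν : IsPMF ν :=
    isPMF_condJoint (pushf_isPMF hμ _) fun z => isPMF_pi_prod fun q => hphat q z
  have hZ : pushf μ Prod.snd = pushf ν Prod.snd :=
    (pushf_snd_condJoint fun z => sum_pi_prod fun q => (hphat q z).2).symm
  have hTV' : TV μ ν ≤ ε := hTV.le
  have hε0 : 0 ≤ ε := (TV_nonneg μ ν).trans hTV'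
  have hhb : 0 ≤ hb ε := hb_eq_binEntropy ε ▸ binEntropy_nonneg hε0 (by linarith)
  have hcoord := Finset.sum_le_sum fun q (_ : q ∈ Finset.univ) => (le_abs_self _).trans
    (abs_Hent_pair_sub_le hμ hν (fun ω => ω.1 q) Prod.snd hZ hTV' hε.le)
  have hjoint := (neg_le_abs _).trans (abs_Hent_pair_sub_le hμ hν Prod.fst Prod.snd hZ hTV' hε.le)
  rw [Fintype.card_fun, Fintype.card_fin, Nat.cast_pow, log_pow] at hjoint
  rw [Finset.sum_const, Finset.card_univ, Fintype.card_fin, nsmul_eq_mul] at hcoord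
  refine (sum_condMI_prefix_eq_sub_condJoint μ (fun q z => (hphat q z).2) rfl).trans_le ?_
  have hn1 : (1 : ℝ) ≤ n := by exact_mod_cast hn
  nlinarith [mul_le_mul_of_nonneg_right hn1 hhb]
end

section
/- Let ω, C_1,...,C_r, X_1^n, X_2^n satisfy the conditions of the interactive communication Markov structure: ω independent of the i.i.d. pair sequence (X_1^n, X_2^n), C_i — (ω, C_{[1:i-1]}, X_1^n) — X_2^n for odd i, and C_i — (ω, C_{[1:i-1]}, X_2^n) — X_1^n for even i. Then for each q and each odd i, the Markov chain C_i — (ω, C_{[1:i-1]}, X_1^{q:n}, X_2^{1:q-1}) — X_{2,q} holds, i.e., I(C_i; X_{2,q} | ω, C_{[1:i-1]}, X_1^{q:n}, X_2^{1:q-1}) = 0. -/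
open Finset

/-!
By induction on the rounds, the law of `(ω, C_{[1:k]}, X_1^n, X_2^n)` has the form
`φ(ω, C, x₁) ψ(ω, C, x₂) ∏ⱼ p(x₁ⱼ, x₂ⱼ)`. Indeed a vanishing `I(A; C | B)` means that the law
of `(A, B, C)` is `P_{AB} P_{BC} / P_B` (the equality case of Gibbs' inequality), so each message
multiplies the law by a kernel that sees only its sender's source.

For an odd round `i` the law of `(C_i, ω, C_{[1:i-1]}, X_1^n, X_2^n)` is therefore
`F(ω, C_{[1:i]}, x₁) H(ω, C_{[1:i-1]}, x₂) ∏ⱼ p(x₁ⱼ, x₂ⱼ)`. Putting the factors `j < q` of the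
product into `F` and the others into `H` writes it as `Φ(a, b) Ψ(b, c)` with
`a = (C_i, X_1^{1:q-1})`, `b = (ω, C_{[1:i-1]}, X_1^{q:n}, X_2^{1:q-1})`, `c = X_2^{q:n}`;
such a product form forces `I(a; c | b) = 0`, and this survives forgetting parts of `a` and `c`.
-/

open Real InformationTheory

section Pushforward

variable {Ω α β : Type*} [Fintype Ω] [DecidableEq α] [DecidableEq β] {μ : Ω → ℝ}

lemma pushf_nonneg (hμ : ∀ ω, 0 ≤ μ ω) (X : Ω → α) (a : α) : 0 ≤ pushf μ X a :=
  sum_nonneg fun ω _ => hμ ω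

lemma pushf_comp [Fintype α] (X : Ω → α) (f : α → β) (b : β) :
    pushf μ (fun ω => f (X ω)) b = ∑ a with f a = b, pushf μ X a := by
  unfold pushf
  rw [sum_fiberwise_eq_sum_filter]
  simp

lemma pushf_comp_of_injective {f : α → β} (hf : Function.Injective f) (X : Ω → α) (a : α) :
    pushf μ (fun ω => f (X ω)) (f a) = pushf μ X a := by
  simp only [pushf, hf.eq_iff]

lemma sum_pushf_pair_right [Fintype β] (X : Ω → α) (Y : Ω → β) (a : α) :
    ∑ b, pushf μ (fun ω => (X ω, Y ω)) (a, b) = pushf μ X a := by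
  unfold pushf
  rw [← sum_fiberwise (univ.filter fun ω => X ω = a) Y μ]
  simp [filter_filter]

lemma sum_pushf_pair_left [Fintype α] (X : Ω → α) (Y : Ω → β) (b : β) :
    ∑ a, pushf μ (fun ω => (X ω, Y ω)) (a, b) = pushf μ Y b := by
  unfold pushf
  rw [← sum_fiberwise (univ.filter fun ω => Y ω = b) X μ]
  simp [filter_filter, and_comm]

end Pushforward

lemma eq_of_sum_mul_log_div_eq_zero {ι : Type*} [Fintype ι] {P Q : ι → ℝ}
    (hP : ∀ i, 0 ≤ P i) (hQ : ∀ i, 0 ≤ Q i) (hPQ : ∀ i, 0 < P i → 0 < Q i)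
    (hsum : ∑ i, P i = ∑ i, Q i) (h : ∑ i, P i * log (P i / Q i) = 0) : P = Q := by
  set T : ι → ℝ := fun i => P i * log (P i / Q i) + Q i - P i with hT
  have hT_spec : ∀ i, 0 ≤ T i ∧ (T i = 0 → P i = Q i) := by
    intro i
    rcases (hP i).eq_or_lt with hPi | hPi
    · simp only [hT, ← hPi, zero_mul, zero_add, sub_zero]
      exact ⟨hQ i, Eq.symm⟩
    · have hQi := hPQ i hPi
      have hkl : T i = Q i * klFun (P i / Q i) := by
        simp only [hT, klFun]
        field_simp
      rw [hkl, mul_eq_zero, klFun_eq_zero_iff (by positivity), div_eq_one_iff_eq hQi.ne']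
      exact ⟨mul_nonneg (hQ i) (klFun_nonneg (by positivity)), fun h => h.resolve_left hQi.ne'⟩
  have hT_sum : ∑ i, T i = 0 := by
    simp only [hT, sum_sub_distrib, sum_add_distrib, h, hsum]
    ring
  funext i
  exact (hT_spec i).2 ((sum_eq_zero_iff_of_nonneg fun i _ => (hT_spec i).1).1 hT_sum i (mem_univ i))

section JointLaw

variable {α β γ : Type*} {P : α × β × γ → ℝ}

noncomputable def margAB [Fintype γ] (P : α × β × γ → ℝ) (x : α × β) : ℝ := ∑ c, P (x.1, x.2, c)

noncomputable def margBC [Fintype α] (P : α × β × γ → ℝ) (x : β × γ) : ℝ := ∑ a, P (a, x.1, x.2)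

noncomputable def margB [Fintype α] [Fintype γ] (P : α × β × γ → ℝ) (b : β) : ℝ :=
  ∑ a, ∑ c, P (a, b, c)

noncomputable def cmi [Fintype α] [Fintype β] [Fintype γ] (P : α × β × γ → ℝ) : ℝ :=
  ent (margAB P) + ent (margBC P) - ent P - ent (margB P)

/-- The law with the same `(A, B)` and `(B, C)` marginals under which `A — B — C` is Markov.
Where `margB P b = 0` the division returns `0`, which is also the value of `P` there. -/
noncomputable def markovJoint [Fintype α] [Fintype γ] (P : α × β × γ → ℝ) (x : α × β × γ) : ℝ :=
  margAB P (x.1, x.2.1) * margBC P x.2 / margB P x.2.1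

lemma le_margAB [Fintype γ] (hP : ∀ x, 0 ≤ P x) (a : α) (b : β) (c : γ) :
    P (a, b, c) ≤ margAB P (a, b) :=
  single_le_sum (f := fun c => P (a, b, c)) (fun _ _ => hP _) (mem_univ c)

lemma le_margBC [Fintype α] (hP : ∀ x, 0 ≤ P x) (a : α) (b : β) (c : γ) :
    P (a, b, c) ≤ margBC P (b, c) :=
  single_le_sum (f := fun a => P (a, b, c)) (fun _ _ => hP _) (mem_univ a)

lemma margAB_le_margB [Fintype α] [Fintype γ] (hP : ∀ x, 0 ≤ P x) (a : α) (b : β) :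
    margAB P (a, b) ≤ margB P b :=
  single_le_sum (f := fun a => margAB P (a, b)) (fun _ _ => sum_nonneg fun _ _ => hP _)
    (mem_univ a)

lemma mul_log_div_markovJoint [Fintype α] [Fintype γ] (hP : ∀ x, 0 ≤ P x) (x : α × β × γ) :
    P x * log (P x / markovJoint P x) = P x * (log (P x) + log (margB P x.2.1)
      - log (margAB P (x.1, x.2.1)) - log (margBC P x.2)) := by
  obtain ⟨a, b, c⟩ := x
  rcases (hP (a, b, c)).eq_or_lt with h0 | hpos
  · simp [← h0]
  have hAB := hpos.trans_le (le_margAB hP a b c)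
  have hBC := hpos.trans_le (le_margBC hP a b c)
  have hB := hAB.trans_le (margAB_le_margB hP a b)
  rw [markovJoint, log_div hpos.ne' (by positivity), log_div (by positivity) hB.ne',
    log_mul hAB.ne' hBC.ne']
  ring

lemma markovJoint_eq_of_eq_mul [Fintype α] [Fintype γ] (hP : ∀ x, 0 ≤ P x)
    {Φ : α → β → ℝ} {Ψ : β → γ → ℝ}
    (h : ∀ a b c, P (a, b, c) = Φ a b * Ψ b c) : markovJoint P = P := by
  funext ⟨a, b, c⟩
  rcases eq_or_ne (margB P b) 0 with hB | hB
  · have hP0 : P (a, b, c) = 0 := le_antisymm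
      (hB ▸ (le_margAB hP a b c).trans (margAB_le_margB hP a b)) (hP _)
    rw [markovJoint, hP0, hB, div_zero]
  have hmargB : margB P b = (∑ a, Φ a b) * ∑ c, Ψ b c := by
    simp only [margB, h, sum_mul_sum]
  obtain ⟨hΦ, hΨ⟩ := mul_ne_zero_iff.1 (hmargB ▸ hB)
  simp only [markovJoint, margAB, margBC, hmargB, h, ← mul_sum, ← sum_mul]
  field_simp

variable [Fintype α] [Fintype β] [Fintype γ]

lemma sum_markovJoint : ∑ x, markovJoint P x = ∑ x, P x := by
  have hAB : ∀ b, ∑ a, margAB P (a, b) = margB P b := fun b => rfl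
  have hBC : ∀ b, ∑ c, margBC P (b, c) = margB P b := fun b => sum_comm
  calc ∑ x, markovJoint P x
      = ∑ b, (∑ a, margAB P (a, b)) * (∑ c, margBC P (b, c)) / margB P b := by
        simp only [markovJoint, Fintype.sum_prod_type, sum_mul_sum, sum_div]
        exact sum_comm
    _ = ∑ b, margB P b := by simp only [hAB, hBC, mul_self_div_self]
    _ = ∑ x, P x := by simp only [margB, Fintype.sum_prod_type]; exact sum_comm

lemma cmi_eq_sum_mul_log_div (hP : ∀ x, 0 ≤ P x) :
    cmi P = ∑ x, P x * log (P x / markovJoint P x) := by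
  have hAB : ∑ y, margAB P y * log (margAB P y) = ∑ x, P x * log (margAB P (x.1, x.2.1)) := by
    simp only [margAB, Fintype.sum_prod_type, sum_mul]
  have hBC : ∑ y, margBC P y * log (margBC P y) = ∑ x, P x * log (margBC P x.2) := by
    simp only [margBC, Fintype.sum_prod_type, sum_mul]
    rw [sum_comm (γ := α)]
    exact sum_congr rfl fun _ _ => sum_comm
  have hB : ∑ b, margB P b * log (margB P b) = ∑ x, P x * log (margB P x.2.1) := by
    simp only [margB, Fintype.sum_prod_type, sum_mul]
    exact sum_comm
  simp only [cmi, ent, hAB, hBC, hB, mul_log_div_markovJoint hP, mul_add, mul_sub,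
    sum_add_distrib, sum_sub_distrib]
  ring

lemma cmi_eq_zero_iff (hP : ∀ x, 0 ≤ P x) : cmi P = 0 ↔ P = markovJoint P := by
  refine ⟨fun h => ?_, fun h => ?_⟩
  · refine eq_of_sum_mul_log_div_eq_zero hP (fun x => ?_) (fun ⟨a, b, c⟩ hpos => ?_)
      sum_markovJoint.symm (by rw [← cmi_eq_sum_mul_log_div hP, h])
    · exact div_nonneg (mul_nonneg (sum_nonneg fun _ _ => hP _) (sum_nonneg fun _ _ => hP _))
        (sum_nonneg fun _ _ => sum_nonneg fun _ _ => hP _)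
    · have hAB := hpos.trans_le (le_margAB hP a b c)
      have hBC := hpos.trans_le (le_margBC hP a b c)
      exact div_pos (mul_pos hAB hBC) (hAB.trans_le (margAB_le_margB hP a b))
  · rw [cmi_eq_sum_mul_log_div hP, ← h]
    refine sum_eq_zero fun x _ => ?_
    rcases eq_or_ne (P x) 0 with h0 | h0 <;> simp [h0]

end JointLaw

section ConditionalIndependence

variable {Ω α β γ : Type*} [Fintype Ω] [DecidableEq α] [DecidableEq β] [DecidableEq γ]

section Marginals

variable (μ : Ω → ℝ) (A : Ω → α) (B : Ω → β) (C : Ω → γ)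

lemma pushf_pair_eq_margAB [Fintype γ] :
    pushf μ (fun ω => (A ω, B ω)) = margAB (pushf μ (fun ω => (A ω, B ω, C ω))) := by
  ext ⟨a, b⟩
  rw [margAB, ← sum_pushf_pair_right (fun ω => (A ω, B ω)) C]
  exact sum_congr rfl fun c _ =>
    (pushf_comp_of_injective (Equiv.prodAssoc α β γ).injective _ ((a, b), c)).symm

lemma pushf_pair_eq_margBC [Fintype α] :
    pushf μ (fun ω => (B ω, C ω)) = margBC (pushf μ (fun ω => (A ω, B ω, C ω))) := by
  ext ⟨b, c⟩
  exact (sum_pushf_pair_left A (fun ω => (B ω, C ω)) (b, c)).symm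

lemma pushf_eq_margB [Fintype α] [Fintype γ] :
    pushf μ B = margB (pushf μ (fun ω => (A ω, B ω, C ω))) := by
  ext b
  rw [margB, ← sum_pushf_pair_left A B]
  exact sum_congr rfl fun a _ => congrFun (pushf_pair_eq_margAB μ A B C) (a, b)

end Marginals

variable [Fintype α] [Fintype β] [Fintype γ] {μ : Ω → ℝ} {A : Ω → α} {B : Ω → β} {C : Ω → γ}

lemma condMI_eq_cmi : condMI μ A B C = cmi (pushf μ (fun ω => (A ω, B ω, C ω))) := by
  rw [condMI, Hent, Hent, Hent, Hent, pushf_pair_eq_margAB μ A B C, pushf_pair_eq_margBC μ A B C,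
    pushf_eq_margB μ A B C, cmi]

lemma pushf_eq_div_mul_of_condMI_eq_zero (hμ : ∀ ω, 0 ≤ μ ω) (h : condMI μ A B C = 0)
    (a : α) (b : β) (c : γ) :
    pushf μ (fun ω => (A ω, B ω, C ω)) (a, b, c)
      = pushf μ (fun ω => (A ω, B ω)) (a, b) / pushf μ B b
        * pushf μ (fun ω => (B ω, C ω)) (b, c) := by
  rw [condMI_eq_cmi, cmi_eq_zero_iff (pushf_nonneg hμ _)] at h
  rw [congrFun h, markovJoint, pushf_pair_eq_margAB μ A B C, pushf_pair_eq_margBC μ A B C,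
    pushf_eq_margB μ A B C, div_mul_eq_mul_div]

lemma condMI_eq_zero_of_pushf_eq_mul (hμ : ∀ ω, 0 ≤ μ ω) {Φ : α → β → ℝ} {Ψ : β → γ → ℝ}
    (h : ∀ a b c, pushf μ (fun ω => (A ω, B ω, C ω)) (a, b, c) = Φ a b * Ψ b c) :
    condMI μ A B C = 0 := by
  rw [condMI_eq_cmi, cmi_eq_zero_iff (pushf_nonneg hμ _)]
  exact (markovJoint_eq_of_eq_mul (pushf_nonneg hμ _) h).symm

lemma pushf_comp_eq_mul {α' γ' : Type*} [DecidableEq α'] [DecidableEq γ'] {Φ : α → β → ℝ}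
    {Ψ : β → γ → ℝ} (h : ∀ a b c, pushf μ (fun ω => (A ω, B ω, C ω)) (a, b, c) = Φ a b * Ψ b c)
    (f : α → α') (g : γ → γ') (a' : α') (b : β) (c' : γ') :
    pushf μ (fun ω => (f (A ω), B ω, g (C ω))) (a', b, c')
      = (∑ a with f a = a', Φ a b) * ∑ c with g c = c', Ψ b c := by
  have hfiber : univ.filter (fun x : α × β × γ => (f x.1, x.2.1, g x.2.2) = (a', b, c'))
      = (univ.filter (f · = a')) ×ˢ ({b} ×ˢ univ.filter (g · = c')) := by
    ext
    simp only [mem_filter, mem_univ, true_and, mem_product, mem_singleton, Prod.mk.injEq]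
  rw [pushf_comp (fun ω => (A ω, B ω, C ω)) (fun x => (f x.1, x.2.1, g x.2.2)), hfiber, sum_mul_sum]
  simp [sum_product, h]

end ConditionalIndependence

section Protocol

variable {Ω 𝒜 𝒞 𝒳₁ 𝒳₂ : Type*} {n r : ℕ}

def roundState (G : Ω → 𝒜) (C : Fin r → Ω → 𝒞) (X1 : Ω → Fin n → 𝒳₁) (X2 : Ω → Fin n → 𝒳₂)
    (k : ℕ) (hk : k ≤ r) (ω : Ω) : 𝒜 × (Fin k → 𝒞) × (Fin n → 𝒳₁) × (Fin n → 𝒳₂) :=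
  (G ω, fun j => C (Fin.castLE hk j) ω, X1 ω, X2 ω)

variable [Fintype Ω] [Fintype 𝒞] [DecidableEq 𝒜] [DecidableEq 𝒞] [DecidableEq 𝒳₁] [DecidableEq 𝒳₂]
  {μ : Ω → ℝ} (G : Ω → 𝒜) (C : Fin r → Ω → 𝒞) (X1 : Ω → Fin n → 𝒳₁) (X2 : Ω → Fin n → 𝒳₂)

/-- `v` is the part of the state that the sender of message `k` sees, `w` the rest. -/
lemma exists_pushf_roundState_succ (hμ : ∀ ω, 0 ≤ μ ω) {k : ℕ} (hk : k < r)
    {β γ : Type*} [Fintype β] [Fintype γ] [DecidableEq β] [DecidableEq γ]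
    (v : 𝒜 × (Fin k → 𝒞) × (Fin n → 𝒳₁) × (Fin n → 𝒳₂) → β)
    (w : 𝒜 × (Fin k → 𝒞) × (Fin n → 𝒳₁) × (Fin n → 𝒳₂) → γ)
    (hvw : Function.Injective fun z => (v z, w z))
    (h : condMI μ (C ⟨k, hk⟩) (fun ω => v (roundState G C X1 X2 k hk.le ω))
      (fun ω => w (roundState G C X1 X2 k hk.le ω)) = 0) :
    ∃ K : 𝒞 → β → ℝ, ∀ g c x1 x2,
      pushf μ (roundState G C X1 X2 (k + 1) hk) (g, c, x1, x2)
        = K (c (Fin.last k)) (v (g, Fin.init c, x1, x2))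
          * pushf μ (roundState G C X1 X2 k hk.le) (g, Fin.init c, x1, x2) := by
  set Z := roundState G C X1 X2 k hk.le
  have hlast : Function.Injective
      fun z : 𝒜 × (Fin (k + 1) → 𝒞) × (Fin n → 𝒳₁) × (Fin n → 𝒳₂) =>
        (z.2.1 (Fin.last k), z.1, Fin.init z.2.1, z.2.2) :=
    Function.LeftInverse.injective (g := fun t => (t.2.1, Fin.snoc t.2.2.1 t.1, t.2.2.2))
      fun z => by simp
  have hE := (Function.injective_id.prodMap hvw).comp hlast
  refine ⟨fun a b =>
    pushf μ (fun ω => (C ⟨k, hk⟩ ω, v (Z ω))) (a, b) / pushf μ (fun ω => v (Z ω)) b,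
    fun g c x1 x2 => ?_⟩
  rw [← pushf_comp_of_injective hE, ← pushf_comp_of_injective hvw (fun ω => Z ω)]
  exact pushf_eq_div_mul_of_condMI_eq_zero hμ h _ _ _

lemma exists_pushf_roundState_eq_mul_prod [Fintype 𝒜] [Fintype 𝒳₁] [Fintype 𝒳₂]
    (hμ : ∀ ω, 0 ≤ μ ω) (p : 𝒳₁ × 𝒳₂ → ℝ)
    (hiid : pushf μ (fun ω => (G ω, fun q => (X1 ω q, X2 ω q)))
      = fun z => pushf μ G z.1 * ∏ q, p (z.2 q))
    (hodd : ∀ i : Fin r, Even i.val →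
      condMI μ (C i)
        (fun ω => (G ω, (fun j : Fin i.val => C (Fin.castLE i.isLt.le j) ω), X1 ω)) X2 = 0)
    (heven : ∀ i : Fin r, Odd i.val →
      condMI μ (C i)
        (fun ω => (G ω, (fun j : Fin i.val => C (Fin.castLE i.isLt.le j) ω), X2 ω)) X1 = 0)
    (k : ℕ) (hk : k ≤ r) :
    ∃ (φ : 𝒜 → (Fin k → 𝒞) → (Fin n → 𝒳₁) → ℝ) (ψ : 𝒜 → (Fin k → 𝒞) → (Fin n → 𝒳₂) → ℝ),
      ∀ g c x1 x2, pushf μ (roundState G C X1 X2 k hk) (g, c, x1, x2)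
        = φ g c x1 * ψ g c x2 * ∏ j, p (x1 j, x2 j) := by
  induction k with
  | zero =>
    have he : Function.Injective fun z : 𝒜 × (Fin 0 → 𝒞) × (Fin n → 𝒳₁) × (Fin n → 𝒳₂) =>
        (z.1, fun q => (z.2.2.1 q, z.2.2.2 q)) := by
      rintro ⟨g, c, x1, x2⟩ ⟨g', c', x1', x2'⟩ h
      simp only [Prod.mk.injEq, funext_iff] at h ⊢
      exact ⟨h.1, fun j => j.elim0, fun q => (h.2 q).1, fun q => (h.2 q).2⟩
    refine ⟨fun g _ _ => pushf μ G g, fun _ _ _ => 1, fun g c x1 x2 => ?_⟩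
    rw [← pushf_comp_of_injective he]
    simp only [mul_one]
    exact congrFun hiid (g, fun q => (x1 q, x2 q))
  | succ k ih =>
    obtain ⟨φ, ψ, hfac⟩ := ih (Nat.le_of_succ_le hk)
    rcases Nat.even_or_odd k with hk2 | hk2
    · obtain ⟨K, hK⟩ := exists_pushf_roundState_succ G C X1 X2 hμ hk
        (fun z => (z.1, z.2.1, z.2.2.1)) (fun z => z.2.2.2)
        (fun _ _ h => by simp only [Prod.ext_iff] at h ⊢; tauto) (hodd ⟨k, hk⟩ hk2)
      refine ⟨fun g c x1 => K (c (Fin.last k)) (g, Fin.init c, x1) * φ g (Fin.init c) x1,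
        fun g c x2 => ψ g (Fin.init c) x2, fun g c x1 x2 => ?_⟩
      rw [hK, hfac]
      ring
    · obtain ⟨K, hK⟩ := exists_pushf_roundState_succ G C X1 X2 hμ hk
        (fun z => (z.1, z.2.1, z.2.2.2)) (fun z => z.2.2.1)
        (fun _ _ h => by simp only [Prod.ext_iff] at h ⊢; tauto) (heven ⟨k, hk⟩ hk2)
      refine ⟨fun g c x1 => φ g (Fin.init c) x1,
        fun g c x2 => K (c (Fin.last k)) (g, Fin.init c, x2) * ψ g (Fin.init c) x2,
        fun g c x1 x2 => ?_⟩
      rw [hK, hfac]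
      ring

end Protocol

section Split

variable {𝒜 𝒞 𝒳₁ 𝒳₂ : Type*} {n : ℕ}

/-- In the paper's notation: `((C_{k+1}, X_1^{1:q-1}), ((ω, C_{[1:k]}), (X_1^{q:n}, X_2^{1:q-1})),
X_2^{q:n})`. -/
def splitStateAt (q : Fin n) (k : ℕ) :
    𝒜 × (Fin (k + 1) → 𝒞) × (Fin n → 𝒳₁) × (Fin n → 𝒳₂)
      ≃ (𝒞 × ({j // ¬ q ≤ j} → 𝒳₁))
        × ((𝒜 × (Fin k → 𝒞)) × (({j // q ≤ j} → 𝒳₁) × ({j // j < q} → 𝒳₂)))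
        × ({j // ¬ j < q} → 𝒳₂) where
  toFun z := ((z.2.1 (Fin.last k), fun j => z.2.2.1 j),
    ((z.1, Fin.init z.2.1), (fun j => z.2.2.1 j, fun j => z.2.2.2 j)), fun j => z.2.2.2 j)
  invFun t := (t.2.1.1.1, Fin.snoc t.2.1.1.2 t.1.1,
    (Equiv.piEquivPiSubtypeProd (q ≤ ·) _).symm (t.2.1.2.1, t.1.2),
    (Equiv.piEquivPiSubtypeProd (· < q) _).symm (t.2.1.2.2, t.2.2))
  left_inv z := by
    ext <;> simp
  right_inv t := by
    ext <;> simp <;> grind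

set_option synthInstance.maxSize 1000 in
lemma exists_pushf_splitStateAt_eq_mul {Ω : Type*} [Fintype Ω] [DecidableEq 𝒜] [DecidableEq 𝒞]
    [DecidableEq 𝒳₁] [DecidableEq 𝒳₂] {μ : Ω → ℝ} (q : Fin n) {k : ℕ}
    (Z : Ω → 𝒜 × (Fin (k + 1) → 𝒞) × (Fin n → 𝒳₁) × (Fin n → 𝒳₂))
    (F : 𝒜 → (Fin (k + 1) → 𝒞) → (Fin n → 𝒳₁) → ℝ) (H : 𝒜 → (Fin k → 𝒞) → (Fin n → 𝒳₂) → ℝ)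
    (p : 𝒳₁ × 𝒳₂ → ℝ)
    (h : ∀ g c x1 x2,
      pushf μ Z (g, c, x1, x2) = F g c x1 * H g (Fin.init c) x2 * ∏ j, p (x1 j, x2 j)) :
    ∃ (Φ : 𝒞 × ({j // ¬ q ≤ j} → 𝒳₁)
        → (𝒜 × (Fin k → 𝒞)) × (({j // q ≤ j} → 𝒳₁) × ({j // j < q} → 𝒳₂)) → ℝ)
      (Ψ : (𝒜 × (Fin k → 𝒞)) × (({j // q ≤ j} → 𝒳₁) × ({j // j < q} → 𝒳₂))
        → ({j // ¬ j < q} → 𝒳₂) → ℝ),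
      ∀ a b c, pushf μ (fun ω => splitStateAt q k (Z ω)) (a, b, c) = Φ a b * Ψ b c := by
  refine ⟨fun ⟨a, u⟩ ⟨⟨g, c⟩, y1, y2⟩ =>
      let x1 := (Equiv.piEquivPiSubtypeProd (q ≤ ·) _).symm (y1, u)
      F g (Fin.snoc c a) x1 * ∏ j : {j // j < q}, p (x1 j, y2 j),
    fun ⟨⟨g, c⟩, y1, y2⟩ w =>
      H g c ((Equiv.piEquivPiSubtypeProd (· < q) _).symm (y2, w))
        * ∏ j : {j // ¬ j < q}, p (y1 ⟨j, not_lt.1 j.2⟩, w j), fun a b c => ?_⟩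
  obtain ⟨⟨g, cs, x1, x2⟩, hz⟩ := (splitStateAt q k).surjective (a, b, c)
  rw [← hz, pushf_comp_of_injective (splitStateAt q k).injective, h]
  cases hz
  have hx1 := (Equiv.piEquivPiSubtypeProd (q ≤ ·) _).symm_apply_apply x1
  have hx2 := (Equiv.piEquivPiSubtypeProd (· < q) _).symm_apply_apply x2
  simp only [Equiv.piEquivPiSubtypeProd_apply] at hx1 hx2
  simp only [Fin.snoc_init_self, hx1, hx2]
  rw [← Fintype.prod_subtype_mul_prod_subtype (· < q)]
  ring

end Split

-- Rounds are 0-indexed: the paper's odd rounds are those with `Even i.val`.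
theorem markov_single_letter_odd_general {Ω 𝒜 𝒞 𝒳₁ 𝒳₂ : Type*} {n r : ℕ}
    [Fintype Ω] [Fintype 𝒜] [Fintype 𝒞] [Fintype 𝒳₁] [Fintype 𝒳₂]
    [DecidableEq 𝒜] [DecidableEq 𝒞] [DecidableEq 𝒳₁] [DecidableEq 𝒳₂]
    (μ : Ω → ℝ) (hμ : IsPMF μ)
    (G : Ω → 𝒜) (C : Fin r → Ω → 𝒞)
    (X1 : Ω → Fin n → 𝒳₁) (X2 : Ω → Fin n → 𝒳₂)
    (p : 𝒳₁ × 𝒳₂ → ℝ)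
    (hiid : pushf μ (fun ω => (G ω, fun q => (X1 ω q, X2 ω q)))
      = fun z => pushf μ G z.1 * ∏ q, p (z.2 q))
    (hodd : ∀ i : Fin r, Even i.val →
      condMI μ (C i)
        (fun ω => (G ω, (fun j : Fin i.val => C (Fin.castLE i.isLt.le j) ω), X1 ω))
        X2 = 0)
    (heven : ∀ i : Fin r, Odd i.val →
      condMI μ (C i)
        (fun ω => (G ω, (fun j : Fin i.val => C (Fin.castLE i.isLt.le j) ω), X2 ω))
        X1 = 0) :
    ∀ (q : Fin n) (i : Fin r), Even i.val →
      condMI μ (C i)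
        (fun ω => ((G ω, (fun j : Fin i.val => C (Fin.castLE i.isLt.le j) ω)),
          ((fun j : {j : Fin n // q ≤ j} => X1 ω j.1),
           (fun j : {j : Fin n // j < q} => X2 ω j.1))))
        (fun ω => X2 ω q) = 0 := by
  intro q i hi
  obtain ⟨φ, ψ, hstate⟩ := exists_pushf_roundState_eq_mul_prod G C X1 X2 hμ.1 p hiid hodd heven
    i i.isLt.le
  obtain ⟨K, hround⟩ := exists_pushf_roundState_succ G C X1 X2 hμ.1 i.isLt
    (fun z => (z.1, z.2.1, z.2.2.1)) (fun z => z.2.2.2)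
    (fun _ _ h => by simp only [Prod.ext_iff] at h ⊢; tauto) (hodd i hi)
  obtain ⟨Φ, Ψ, hsplit⟩ := exists_pushf_splitStateAt_eq_mul q
    (roundState G C X1 X2 (i + 1) i.isLt)
    (fun g c x1 => K (c (Fin.last i)) (g, Fin.init c, x1) * φ g (Fin.init c) x1) ψ p
    (fun g c x1 x2 => by rw [hround, hstate]; ring)
  apply condMI_eq_zero_of_pushf_eq_mul hμ.1
  exact pushf_comp_eq_mul hsplit Prod.fst (fun w => w ⟨q, lt_irrefl q⟩)

/-- under the interactive communication Markov structure (`G` independent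
of the i.i.d. pair sequence `(X_1^n, X_2^n)`, `C_i — (G, C_{<i}, X_1^n) — X_2^n` for
paper-odd rounds (0-indexed: `Even i.val`), `C_i — (G, C_{<i}, X_2^n) — X_1^n` for
paper-even rounds), for each `q` and each paper-odd `i`, the Markov chain
`C_i — (G, C_{<i}, X_1^{q:n}, X_2^{1:q-1}) — X_{2,q}` holds. -/
theorem markov_single_letter_odd {Ω 𝒜 𝒞 𝒳₁ 𝒳₂ : Type*} {n r : ℕ}
    [Fintype Ω] [Fintype 𝒜] [Fintype 𝒞] [Fintype 𝒳₁] [Fintype 𝒳₂]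
    [DecidableEq 𝒜] [DecidableEq 𝒞] [DecidableEq 𝒳₁] [DecidableEq 𝒳₂]
    (μ : Ω → ℝ) (hμ : IsPMF μ)
    (G : Ω → 𝒜) (C : Fin r → Ω → 𝒞)
    (X1 : Ω → Fin n → 𝒳₁) (X2 : Ω → Fin n → 𝒳₂)
    (p : 𝒳₁ × 𝒳₂ → ℝ) (hp : IsPMF p)
    (hiid : pushf μ (fun ω => (G ω, fun q => (X1 ω q, X2 ω q)))
      = fun z => pushf μ G z.1 * ∏ q, p (z.2 q))
    (hodd : ∀ i : Fin r, Even i.val →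
      condMI μ (C i)
        (fun ω => (G ω, (fun j : Fin i.val => C (Fin.castLE i.isLt.le j) ω), X1 ω))
        X2 = 0)
    (heven : ∀ i : Fin r, Odd i.val →
      condMI μ (C i)
        (fun ω => (G ω, (fun j : Fin i.val => C (Fin.castLE i.isLt.le j) ω), X2 ω))
        X1 = 0) :
    ∀ (q : Fin n) (i : Fin r), Even i.val →
      condMI μ (C i)
        (fun ω => ((G ω, (fun j : Fin i.val => C (Fin.castLE i.isLt.le j) ω)),
          ((fun j : {j : Fin n // q ≤ j} => X1 ω j.1),
           (fun j : {j : Fin n // j < q} => X2 ω j.1))))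
        (fun ω => X2 ω q) = 0 :=
  markov_single_letter_odd_general μ hμ G C X1 X2 p hiid hodd heven
end
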